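/- Let f be the odd solution of f'(t) = (1+2f(t)²)^(-1/2), f(0)=0. Then f(t)²/2 ≤ t f(t) f'(t) ≤ f(t)² for all t ∈ ℝ. -/

import Mathlib

/-!
On `t ≥ 0` put `A t = f t * √(1 + 2 f t²)`. The differential equation gives
`A' = (1 + 4 f²) / (1 + 2 f²) ∈ [1, 2]`, so `t ≤ A t ≤ 2 t` since `A 0 = 0`, while
`A · (f f') = f²`. Multiplying `t ≤ A t ≤ 2 t` by `f f' ≥ 0` is the inequality for `t ≥ 0`;
for `t < 0` both sides are unchanged under `t ↦ -t` because `f` is odd and `f'` even.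
-/

open Real Set

theorem deriv_neg_eq_of_odd {𝕜 F : Type*} [NontriviallyNormedField 𝕜] [NormedAddCommGroup F]
    [NormedSpace 𝕜 F] {f : 𝕜 → F} (hodd : ∀ t, f (-t) = -f t) (t : 𝕜) :
    deriv f (-t) = deriv f t := by
  have hf : f = fun x => -f (-x) := funext fun x => by rw [hodd, neg_neg]
  conv_rhs => rw [hf]
  rw [deriv.fun_neg, deriv_comp_neg, neg_neg]

theorem HasDerivAt.mul_sqrt_one_add_two_mul_sq {g : ℝ → ℝ} {g' x : ℝ} (hg : HasDerivAt g g' x) :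
    HasDerivAt (fun s => g s * √(1 + 2 * g s ^ 2))
      (g' * (1 + 4 * g x ^ 2) / √(1 + 2 * g x ^ 2)) x := by
  have hpos : 0 < 1 + 2 * g x ^ 2 := by positivity
  have hsq : HasDerivAt (fun s => 1 + 2 * g s ^ 2) (4 * g x * g') x :=
    (((hg.fun_pow 2).const_mul 2).const_add 1).congr_deriv (by ring)
  refine (hg.fun_mul (hsq.sqrt hpos.ne')).congr_deriv ?_
  have hsqrt : √(1 + 2 * g x ^ 2) ≠ 0 := (sqrt_pos.mpr hpos).ne'
  field_simp
  rw [sq_sqrt hpos.le]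
  ring

section

variable {f : ℝ → ℝ}

theorem deriv_eq_inv_sqrt_of_nonneg
    (hder : ∀ t : ℝ, 0 ≤ t → deriv f t = (1 + 2 * f t ^ 2) ^ (-(1/2) : ℝ)) {t : ℝ} (ht : 0 ≤ t) :
    deriv f t = (√(1 + 2 * f t ^ 2))⁻¹ := by
  rw [hder t ht, rpow_neg (by positivity), ← sqrt_eq_rpow]

theorem hasDerivAt_mul_sqrt_of_nonneg
    (hder : ∀ t : ℝ, 0 ≤ t → deriv f t = (1 + 2 * f t ^ 2) ^ (-(1/2) : ℝ)) {t : ℝ} (ht : 0 ≤ t) :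
    HasDerivAt (fun s => f s * √(1 + 2 * f s ^ 2)) ((1 + 4 * f t ^ 2) / (1 + 2 * f t ^ 2)) t := by
  have hderiv := deriv_eq_inv_sqrt_of_nonneg hder ht
  have hpos : 0 < √(1 + 2 * f t ^ 2) := sqrt_pos.mpr (by positivity)
  have hdiff : DifferentiableAt ℝ f t :=
    differentiableAt_of_deriv_ne_zero (by rw [hderiv]; positivity)
  refine hdiff.hasDerivAt.mul_sqrt_one_add_two_mul_sq.congr_deriv ?_
  rw [hderiv, inv_mul_eq_div, div_div, mul_self_sqrt (by positivity)]

theorem le_mul_sqrt_le_two_mul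
    (hder : ∀ t : ℝ, 0 ≤ t → deriv f t = (1 + 2 * f t ^ 2) ^ (-(1/2) : ℝ)) (hf0 : f 0 = 0)
    {t : ℝ} (ht : 0 ≤ t) :
    t ≤ f t * √(1 + 2 * f t ^ 2) ∧ f t * √(1 + 2 * f t ^ 2) ≤ 2 * t := by
  set A : ℝ → ℝ := fun s => f s * √(1 + 2 * f s ^ 2)
  have hA : ∀ x ∈ Ici (0 : ℝ), HasDerivAt A ((1 + 4 * f x ^ 2) / (1 + 2 * f x ^ 2)) x :=
    fun x hx => hasDerivAt_mul_sqrt_of_nonneg hder hx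
  have hcont : ContinuousOn A (Ici 0) := fun x hx => (hA x hx).continuousAt.continuousWithinAt
  have hdiff : DifferentiableOn ℝ A (interior (Ici 0)) := fun x hx =>
    (hA x (interior_subset hx)).differentiableAt.differentiableWithinAt
  have hA' : ∀ x ∈ interior (Ici (0 : ℝ)), deriv A x = (1 + 4 * f x ^ 2) / (1 + 2 * f x ^ 2) :=
    fun x hx => (hA x (interior_subset hx)).deriv
  have hA0 : A 0 = 0 := by simp [A, hf0]
  have hlow := (convex_Ici 0).mul_sub_le_image_sub_of_le_deriv hcont hdiff (C := 1)
    (fun x hx => by rw [hA' x hx, le_div_iff₀ (by positivity)]; nlinarith [sq_nonneg (f x)])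
    0 self_mem_Ici t ht ht
  have hhigh := (convex_Ici 0).image_sub_le_mul_sub_of_deriv_le hcont hdiff (C := 2)
    (fun x hx => by rw [hA' x hx, div_le_iff₀ (by positivity)]; nlinarith [sq_nonneg (f x)])
    0 self_mem_Ici t ht ht
  rw [hA0] at hlow hhigh
  constructor <;> linarith

theorem sq_div_two_le_mul_deriv_le_sq_of_nonneg
    (hder : ∀ t : ℝ, 0 ≤ t → deriv f t = (1 + 2 * f t ^ 2) ^ (-(1/2) : ℝ)) (hf0 : f 0 = 0)
    {t : ℝ} (ht : 0 ≤ t) :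
    f t ^ 2 / 2 ≤ t * f t * deriv f t ∧ t * f t * deriv f t ≤ f t ^ 2 := by
  obtain ⟨hlow, hhigh⟩ := le_mul_sqrt_le_two_mul hder hf0 ht
  have hpos : 0 < √(1 + 2 * f t ^ 2) := sqrt_pos.mpr (by positivity)
  have hf : 0 ≤ f t := nonneg_of_mul_nonneg_left (ht.trans hlow) hpos
  have hfd : 0 ≤ f t * deriv f t := by
    rw [deriv_eq_inv_sqrt_of_nonneg hder ht]; positivity
  have hprod : f t * √(1 + 2 * f t ^ 2) * (f t * deriv f t) = f t ^ 2 := by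
    rw [deriv_eq_inv_sqrt_of_nonneg hder ht]; field_simp
  constructor
  · nlinarith [mul_le_mul_of_nonneg_right hhigh hfd]
  · nlinarith [mul_le_mul_of_nonneg_right hlow hfd]

end

theorem stmt_6_general (f : ℝ → ℝ)
    (hodd : ∀ t : ℝ, f (-t) = -f t)
    (hder : ∀ t : ℝ, 0 ≤ t → deriv f t = (1 + 2 * f t ^ 2) ^ (-(1/2) : ℝ))  :
    ∀ t : ℝ, f t ^ 2 / 2 ≤ t * f t * deriv f t ∧ t * f t * deriv f t ≤ f t ^ 2 := by
  have hf0 : f 0 = 0 := by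
    have h := hodd 0
    rw [neg_zero] at h
    linarith
  intro t
  rcases le_total 0 t with ht | ht
  · exact sq_div_two_le_mul_deriv_le_sq_of_nonneg hder hf0 ht
  · have h := sq_div_two_le_mul_deriv_le_sq_of_nonneg hder hf0 (neg_nonneg.mpr ht)
    rw [hodd, deriv_neg_eq_of_odd hodd, neg_sq, neg_mul_neg] at h
    exact h

theorem stmt_6 (f : ℝ → ℝ)
    (hodd : ∀ t : ℝ, f (-t) = -f t)
    (hf0 : f 0 = 0)
    (hC1 : ContDiff ℝ 1 f)
    (hder : ∀ t : ℝ, 0 ≤ t → deriv f t = (1 + 2 * f t ^ 2) ^ (-(1/2) : ℝ))  :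
    ∀ t : ℝ, f t ^ 2 / 2 ≤ t * f t * deriv f t ∧ t * f t * deriv f t ≤ f t ^ 2 :=
  stmt_6_general f hodd hder
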